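/- arXiv:2001.07011 — 6 statements merged into one kernel-verified Lean document; each statement's English description precedes it below -/
import Mathlib

section
/- Let T be a positive integer and let x : Fin T → ℝ be nonnegative with ∑_{t=1}^T x_t = 1. For γ ∈ (0,1], define t^γ := min { t ∈ [T] : ∑_{s=1}^t x_s ≥ γ } (the γ-point). Then the integral ∫_0^1 t^γ dγ is at most ∑_{t=1}^T t · x_t. -/
/-!
Let `S t = x₁ + ⋯ + x_t`. Since `S` is monotone with `S 0 = 0`, the γ-point equals the number of
`t < T` with `S t < γ`. Integrating this count over `γ ∈ (0, 1]` gives `∑_{t<T} (1 - S t)`, and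
`1 - S t` is the tail sum `x_{t+1} + ⋯ + x_T`; summing the tails counts each `x_s` exactly `s` times.
-/

open MeasureTheory Finset

theorem sum_range_sum_Ioc_eq_sum_Icc_mul {R : Type*} [CommSemiring R] (x : ℕ → R) (T : ℕ) :
    ∑ t ∈ range T, ∑ s ∈ Ioc t T, x s = ∑ s ∈ Icc 1 T, (s : R) * x s := by
  rw [sum_comm' (t' := Icc 1 T) (s' := range)]
  · simp only [sum_const, card_range, nsmul_eq_mul]
  · intro t s
    simp only [mem_range, mem_Ioc, mem_Icc]
    omega

theorem card_filter_lt_eq_of_isLeast {S : ℕ → ℝ} (hS : Monotone S) {T n : ℕ} {γ : ℝ}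
    (hγ : S 0 < γ) (h : IsLeast {t | t ∈ Icc 1 T ∧ γ ≤ S t} n) :
    #{t ∈ range T | S t < γ} = n := by
  obtain ⟨⟨hnT, hγn⟩, hleast⟩ := h
  rw [mem_Icc] at hnT
  suffices {t ∈ range T | S t < γ} = range n by rw [this, card_range]
  ext t
  simp only [mem_filter, mem_range]
  constructor
  · rintro ⟨-, hSt⟩
    by_contra! hnt
    exact (hγn.trans (hS hnt)).not_gt hSt
  · intro htn
    refine ⟨htn.trans_le hnT.2, lt_of_not_ge fun hγt => ?_⟩
    rcases Nat.eq_zero_or_pos t with rfl | ht0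
    · exact hγ.not_ge hγt
    · exact (hleast ⟨mem_Icc.2 ⟨ht0, (htn.trans_le hnT.2).le⟩, hγt⟩).not_gt htn

theorem integral_Ioc_indicator_Ioi {a b c : ℝ} (hba : b ≤ a) (hac : a ≤ c) :
    ∫ γ in Set.Ioc b c, (Set.Ioi a).indicator 1 γ = c - a := by
  rw [integral_indicator_one measurableSet_Ioi, measureReal_restrict_apply measurableSet_Ioi,
    Set.inter_comm, Set.Ioc_inter_Ioi, max_eq_right hba, Real.volume_real_Ioc_of_le hac]

theorem integral_Ioc_card_filter_lt {ι : Type*} (s : Finset ι) {S : ι → ℝ}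
    (hS : ∀ i ∈ s, S i ∈ Set.Icc 0 1) :
    ∫ γ in Set.Ioc 0 1, (#{i ∈ s | S i < γ} : ℝ) = ∑ i ∈ s, (1 - S i) := by
  have hcount : ∀ γ, (#{i ∈ s | S i < γ} : ℝ) = ∑ i ∈ s, (Set.Ioi (S i)).indicator 1 γ :=
    fun γ => natCast_card_filter _ s
  simp only [hcount]
  rw [integral_finsetSum s fun i _ => ?_]
  · exact sum_congr rfl fun i hi => integral_Ioc_indicator_Ioi (hS i hi).1 (hS i hi).2
  · exact (integrableOn_const measure_Ioc_lt_top.ne).indicator measurableSet_Ioi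

theorem stmt_0_general (T : ℕ) (x : ℕ → ℝ)
    (hx : ∀ t, 0 ≤ x t)
    (hsum : ∑ t ∈ Finset.Icc 1 T, x t = 1)
    (tp : ℝ → ℕ)
    (htp : ∀ γ ∈ Set.Ioc (0:ℝ) 1,
      IsLeast {t | t ∈ Finset.Icc 1 T ∧ γ ≤ ∑ s ∈ Finset.Icc 1 t, x s} (tp γ)) :
    ∫ γ in Set.Ioc (0:ℝ) 1, (tp γ : ℝ) ≤ ∑ t ∈ Finset.Icc 1 T, (t : ℝ) * x t := by
  set S : ℕ → ℝ := fun t => ∑ s ∈ Icc 1 t, x s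
  have hIcc : ∀ n, Icc 1 n = Ioc 0 n := Icc_add_one_left_eq_Ioc 0
  have hS : Monotone S := fun a b hab =>
    sum_le_sum_of_subset_of_nonneg (Icc_subset_Icc le_rfl hab) fun i _ _ => hx i
  have hSIcc : ∀ t ∈ range T, S t ∈ Set.Icc 0 1 := fun t ht =>
    ⟨sum_nonneg fun i _ => hx i, hsum ▸ hS (mem_range.1 ht).le⟩
  have htail : ∀ t ∈ range T, 1 - S t = ∑ s ∈ Ioc t T, x s := fun t ht => by
    simp only [← hsum, S, hIcc]
    rw [← sum_Ioc_consecutive x t.zero_le (mem_range.1 ht).le, add_sub_cancel_left]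
  rw [← sum_range_sum_Ioc_eq_sum_Icc_mul, ← sum_congr rfl htail,
    ← integral_Ioc_card_filter_lt _ hSIcc]
  refine (setIntegral_congr_fun measurableSet_Ioc fun γ hγ => ?_).le
  rw [card_filter_lt_eq_of_isLeast hS (by simpa [S] using hγ.1) (htp γ hγ)]

/-- The α-point integral bound: if `x` is a nonnegative fractional assignment of one unit
of a job to time slots `1,…,T` and `tp γ` is the γ-point (the least `t ∈ [T]` with
`∑_{s=1}^t x_s ≥ γ`), then `∫_0^1 tp γ dγ ≤ ∑_{t=1}^T t · x_t`. -/
theorem stmt_0 (T : ℕ) (hT : 0 < T) (x : ℕ → ℝ)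
    (hx : ∀ t, 0 ≤ x t)
    (hsum : ∑ t ∈ Finset.Icc 1 T, x t = 1)
    (tp : ℝ → ℕ)
    (htp : ∀ γ ∈ Set.Ioc (0:ℝ) 1,
      IsLeast {t | t ∈ Finset.Icc 1 T ∧ γ ≤ ∑ s ∈ Finset.Icc 1 t, x s} (tp γ)) :
    ∫ γ in Set.Ioc (0:ℝ) 1, (tp γ : ℝ) ≤ ∑ t ∈ Finset.Icc 1 T, (t : ℝ) * x t :=
  stmt_0_general T x hx hsum tp htp
end

section
/- Consider the all-but-one MSSC instance with jobs A = {a_1,...,a_n} and B = {b_1,...,b_n} (n even), where each b_i has predecessor set A \ {a_i} and covering requirement n−2, with p_a = 1, w_a = 0 for a ∈ A and p_b = 0, w_b = 1 for b ∈ B. The optimal schedule value is (n−2)(n+1): scheduling A in any order so that a_i completes at time i, then b_{n-1}, b_n complete at time n−2 and all other b_i complete at time n−1, and no feasible schedule achieves a smaller total weighted completion time. -/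
/-!
By time `t` exactly `min n t` jobs of `A` have completed, so `n - 2` jobs of `A \ {a_i}` have
completed at time `n - 2` if `a_i` is among the last two jobs, and only at time `n - 1` otherwise.
Hence every schedule has the same value `2 (n - 2) + (n - 2)(n - 1) = (n - 2)(n + 1)`.
-/

open scoped Classical

noncomputable def abmCost (n : ℕ) (σ : Equiv.Perm (Fin n)) (i : Fin n) : ℕ :=
  sInf {t : ℕ |
    n - 2 ≤ (Finset.univ.filter (fun j : Fin n => j ≠ i ∧ (σ j : ℕ) + 1 ≤ t)).card}

open Finset

lemma card_filter_perm_val_lt {n : ℕ} (σ : Equiv.Perm (Fin n)) (t : ℕ) :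
    #{j : Fin n | (σ j : ℕ) < t} = min n t :=
  (card_equiv σ (by simp)).trans Fin.card_filter_val_lt

lemma card_filter_ne_perm_val_lt {n : ℕ} (σ : Equiv.Perm (Fin n)) (i : Fin n) (t : ℕ) :
    #{j : Fin n | j ≠ i ∧ (σ j : ℕ) + 1 ≤ t} = min n t - if (σ i : ℕ) < t then 1 else 0 := by
  have : ({j | j ≠ i ∧ (σ j : ℕ) + 1 ≤ t} : Finset (Fin n)) =
      ({j | (σ j : ℕ) < t} : Finset (Fin n)).erase i :=
    Finset.ext fun j => by
      simp only [mem_filter, mem_univ, true_and, mem_erase, Nat.lt_iff_add_one_le]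
  rw [this, card_erase_eq_ite, card_filter_perm_val_lt]
  split_ifs <;> simp_all

lemma abmCost_eq {n : ℕ} (σ : Equiv.Perm (Fin n)) (i : Fin n) :
    abmCost n σ i = if n - 2 ≤ (σ i : ℕ) then n - 2 else n - 1 := by
  have hσi := (σ i).isLt
  refine IsLeast.csInf_eq ⟨?_, fun t ht => ?_⟩ <;>
    simp only [Set.mem_ofPred_eq, card_filter_ne_perm_val_lt] at * <;>
    split_ifs at * <;> omega

lemma sum_abmCost {n : ℕ} (σ : Equiv.Perm (Fin n)) :
    ∑ i, abmCost n σ i = (n - 2) * (n + 1) := by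
  simp only [abmCost_eq]
  rw [Equiv.sum_comp σ (fun k : Fin n => if n - 2 ≤ (k : ℕ) then n - 2 else n - 1),
    Fin.sum_univ_eq_sum_range (fun k => if n - 2 ≤ k then n - 2 else n - 1)]
  obtain _ | _ | m := n
  · simp
  · simp
  · have : ∑ k ∈ range m, (if m ≤ k then m else m + 1) = ∑ k ∈ range m, (m + 1) :=
      sum_congr rfl fun k hk => if_neg (by simpa using hk)
    simp only [Nat.reduceSubDiff, add_tsub_cancel_right, sum_range_succ, this, sum_const,
      card_range, smul_eq_mul, le_refl, ↓reduceIte, le_add_iff_nonneg_right, zero_le]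
    ring

theorem stmt_3_general (n : ℕ) :
    IsLeast {v : ℕ | ∃ σ : Equiv.Perm (Fin n), v = ∑ i : Fin n, abmCost n σ i}
      ((n - 2) * (n + 1)) :=
  ⟨⟨Equiv.refl _, (sum_abmCost _).symm⟩, fun _ ⟨σ, hv⟩ => hv ▸ (sum_abmCost σ).ge⟩

/-- The optimal value of the all-but-one MSSC instance with `A = {a_1,…,a_n}`,
`B = {b_1,…,b_n}` (n even), predecessors of `b_i` being `A \ {a_i}` with covering
requirement `n − 2`, is exactly `(n − 2)(n + 1)`. -/
theorem stmt_3 (n : ℕ) (hn : Even n) (hn2 : 2 ≤ n) :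
    IsLeast {v : ℕ | ∃ σ : Equiv.Perm (Fin n), v = ∑ i : Fin n, abmCost n σ i}
      ((n - 2) * (n + 1)) :=
  stmt_3_general n
end

section
/- Consider the bipartite OR-precedence scheduling instance with m triples {i_q, k_q, j_q}, q = 1,...,m, where p_{i_q} = p_{k_q} = 1, p_{j_q} = 0, w_{i_q} = w_{k_q} = 0, w_{j_q} = 1, and each j_q requires at least one of i_q, k_q to precede it. The minimum total weighted completion time over all feasible single-machine schedules equals m(m+1)/2. -/
open scoped Classical

/-!
Each job `j_r` scheduled no later than `j_q` has its own unit-time predecessor (`i_r` or `k_r`)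
before `j_q`, so `C_{j_q}` is at least the rank of `j_q` among the `j`-jobs. These ranks are
`1, …, m`, so the objective is at least `m(m+1)/2`, and the schedule
`i_1 j_1 i_2 j_2 … i_m j_m k_1 … k_m` attains this bound.
-/

open Finset

theorem two_mul_sum_card_filter_le_of_injective {ι α : Type*} [Fintype ι] [LinearOrder α]
    {f : ι → α} (hf : Function.Injective f) :
    2 * ∑ i, #{j | f j ≤ f i} = Fintype.card ι * (Fintype.card ι + 1) := by
  have hpair : ∀ i j, (if f j ≤ f i then 1 else 0) + (if f i ≤ f j then 1 else 0)
      = 1 + if i = j then 1 else 0 := by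
    intro i j
    rcases eq_or_ne i j with rfl | hij
    · simp
    · rcases (hf.ne hij).lt_or_gt with h | h <;> simp [h.le, h.not_ge, hij]
  calc 2 * ∑ i, #{j | f j ≤ f i}
      = ∑ i, ∑ j, (if f j ≤ f i then 1 else 0)
        + ∑ i, ∑ j, (if f i ≤ f j then 1 else 0) := by
        simp only [card_filter]
        rw [sum_comm (f := fun i j => if f i ≤ f j then 1 else 0)]
        ring
    _ = ∑ i, ∑ j, (1 + if i = j then 1 else 0) := by
        simp only [← sum_add_distrib, hpair]
        rfl
    _ = Fintype.card ι * (Fintype.card ι + 1) := by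
        simp [sum_add_distrib, card_univ, mul_add]

theorem exists_equiv_fin_le_iff {X α : Type*} [Fintype X] [LinearOrder α] {g : X → α}
    (hg : Function.Injective g) :
    ∃ σ : X ≃ Fin (Fintype.card X), ∀ x y, σ x ≤ σ y ↔ g x ≤ g y := by
  let : LinearOrder X := LinearOrder.lift' g hg
  exact ⟨(Fintype.orderIsoFinOfCardEq X rfl).symm.toEquiv, fun x y =>
    (Fintype.orderIsoFinOfCardEq X rfl).symm.le_iff_le⟩

namespace OrPrecedence

variable {m : ℕ} {α : Type*}

theorem sum_processing_eq_card [Preorder α] [DecidableLE α] (σ : Fin m × Fin 3 → α) (t : α)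
    {p : Fin m × Fin 3 → ℝ} (hp : ∀ j, p j = if j.2 = 2 then 0 else 1) :
    ∑ i ∈ univ.filter (fun i => σ i ≤ t), p i = #{i | σ i ≤ t ∧ i.2 ≠ 2} := by
  simp [hp, sum_ite, filter_filter]

theorem card_le_card_units_before [Preorder α] [DecidableLE α] {σ : Fin m × Fin 3 → α}
    (hσ : ∀ q : Fin m, σ (q, 0) < σ (q, 2) ∨ σ (q, 1) < σ (q, 2)) (t : α) :
    #{r | σ (r, 2) ≤ t} ≤ #{i | σ i ≤ t ∧ i.2 ≠ 2} := by
  refine card_le_card_of_surjOn Prod.fst fun r hr => ?_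
  simp only [coe_filter, mem_univ, true_and, Set.mem_ofPred_eq] at hr
  rcases hσ r with h | h
  · exact ⟨(r, 0), by simpa using (h.trans_le hr).le, rfl⟩
  · exact ⟨(r, 1), by simpa using (h.trans_le hr).le, rfl⟩

theorem sum_card_filter_le_of_injective [LinearOrder α] {f : Fin m → α}
    (hf : Function.Injective f) :
    ∑ q, (#{r | f r ≤ f q} : ℝ) = m * (m + 1) / 2 := by
  have := congrArg (Nat.cast (R := ℝ)) (two_mul_sum_card_filter_le_of_injective hf)
  push_cast at this
  simp only [Fintype.card_fin] at this
  linarith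

/-- Positions of the optimal schedule: `i_q, j_q` alternate at the front, all `k_q` at the back. -/
def priority (m : ℕ) (x : Fin m × Fin 3) : ℕ :=
  if x.2 = 0 then 2 * x.1 else if x.2 = 2 then 2 * x.1 + 1 else 2 * m + x.1

theorem priority_injective : Function.Injective (priority m) := by
  rintro ⟨⟨r, hr⟩, c⟩ ⟨⟨s, hs⟩, d⟩ h
  simp only [priority] at h
  fin_cases c <;> fin_cases d <;> simp_all <;> omega

theorem card_units_before_priority (q : Fin m) :
    #{i | priority m i ≤ priority m (q, 2) ∧ i.2 ≠ 2}
      = #{r | priority m (r, 2) ≤ priority m (q, 2)} := by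
  refine card_nbij' Prod.fst (·, 0) ?_ ?_ ?_ ?_
  · rintro ⟨r, c⟩ h
    have := r.isLt
    fin_cases c <;> simp_all [priority] <;> omega
  · intro r h
    simp_all [priority]
    omega
  · rintro ⟨r, c⟩ h
    have := r.isLt
    fin_cases c <;> simp_all [priority]
    omega
  · intro r _
    rfl

end OrPrecedence

open OrPrecedence

theorem stmt_9_general (m : ℕ)
    (p : Fin m × Fin 3 → ℝ)
    (hp : ∀ j, p j = if j.2 = 2 then 0 else 1) :
    IsLeast
      {v : ℝ | ∃ σ : (Fin m × Fin 3) ≃ Fin (Fintype.card (Fin m × Fin 3)),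
        (∀ q : Fin m, σ (q, 0) < σ (q, 2) ∨ σ (q, 1) < σ (q, 2)) ∧
        v = ∑ q : Fin m,
          ∑ i ∈ Finset.univ.filter (fun i => σ i ≤ σ (q, 2)), p i}
      (m * (m + 1) / 2) := by
  constructor
  · obtain ⟨σ, hσ⟩ := exists_equiv_fin_le_iff (priority_injective (m := m))
    refine ⟨σ, fun q => Or.inl ?_, ?_⟩
    · rw [← not_le, hσ, not_le]
      simp [priority]
    · simp only [sum_processing_eq_card _ _ hp]
      simp only [hσ, card_units_before_priority]
      exact (sum_card_filter_le_of_injective (f := fun r => priority m (r, 2))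
        (priority_injective.comp (Prod.mk_left_injective 2))).symm
  · rintro v ⟨σ, hσ, rfl⟩
    rw [← sum_card_filter_le_of_injective (f := fun r => σ (r, 2))
      (σ.injective.comp (Prod.mk_left_injective 2))]
    gcongr with q
    rw [sum_processing_eq_card _ _ hp]
    exact_mod_cast card_le_card_units_before hσ _

/-- The bipartite OR-precedence instance with `m` triples `{i_q, k_q, j_q}` (encoded as
`(q, 0), (q, 1), (q, 2)`), `p_{i_q} = p_{k_q} = 1`, `p_{j_q} = 0`, `w_{j_q} = 1`, other
weights 0, and `j_q` requiring `i_q` or `k_q` to precede it, has minimum total weighted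
completion time exactly `m(m+1)/2`. -/
theorem stmt_9 (m : ℕ) (hm : 1 ≤ m)
    (p : Fin m × Fin 3 → ℝ)
    (hp : ∀ j, p j = if j.2 = 2 then 0 else 1) :
    IsLeast
      {v : ℝ | ∃ σ : (Fin m × Fin 3) ≃ Fin (Fintype.card (Fin m × Fin 3)),
        (∀ q : Fin m, σ (q, 0) < σ (q, 2) ∨ σ (q, 1) < σ (q, 2)) ∧
        v = ∑ q : Fin m,
          ∑ i ∈ Finset.univ.filter (fun i => σ i ≤ σ (q, 2)), p i}
      (m * (m + 1) / 2) :=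
  stmt_9_general m p hp
end

section
/- For any single-machine schedule without idle time of jobs N with processing times p ≥ 0 and completion times C, and any S ⊆ N, it holds that ∑_{j∈S} p_j C_j ≥ (1/2)(∑_{j∈S} p_j)² + (1/2) ∑_{j∈S} p_j². -/
/-!
Expanding `(∑_{j∈S} p_j)²` as a sum over ordered pairs `(i, j)` and splitting each pair according
to whether `i` precedes `j` counts every off-diagonal pair once and every diagonal pair twice, so
`2 ∑_{j∈S} ∑_{i∈S, i ≼ j} p_i p_j = (∑_{j∈S} p_j)² + ∑_{j∈S} p_j²`. Since `C_j` also counts the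
jobs outside `S` scheduled before `j`, and `p ≥ 0`, the inner sum is at most `C_j`.
-/

open scoped Classical

open Finset

section

variable {ι α R : Type*} [LinearOrder α] [CommSemiring R]

lemma ite_le_add_ite_ge_of_injective {σ : ι → α} (hσ : Function.Injective σ) (i j : ι) (x : R) :
    (if σ i ≤ σ j then x else 0) + (if σ j ≤ σ i then x else 0) = x + if i = j then x else 0 := by
  rcases lt_trichotomy (σ i) (σ j) with h | h | h
  · simp [h.le, h.not_ge, hσ.ne_iff.mp h.ne]
  · simp [hσ h]
  · simp [h.le, h.not_ge, hσ.ne_iff.mp h.ne']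

lemma two_mul_sum_sum_filter_le_eq {σ : ι → α} (hσ : Function.Injective σ) (p : ι → R)
    (S : Finset ι) :
    2 * ∑ j ∈ S, ∑ i ∈ S.filter (fun i => σ i ≤ σ j), p i * p j
      = (∑ j ∈ S, p j) ^ 2 + ∑ j ∈ S, p j ^ 2 := by
  have hswap : ∑ j ∈ S, ∑ i ∈ S, (if σ i ≤ σ j then p i * p j else 0)
      = ∑ j ∈ S, ∑ i ∈ S, (if σ j ≤ σ i then p i * p j else 0) := by
    rw [sum_comm]
    exact sum_congr rfl fun _ _ => sum_congr rfl fun _ _ => by rw [mul_comm]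
  simp only [sum_filter]
  calc 2 * ∑ j ∈ S, ∑ i ∈ S, (if σ i ≤ σ j then p i * p j else 0)
      = ∑ j ∈ S, ∑ i ∈ S, ((if σ i ≤ σ j then p i * p j else 0)
          + (if σ j ≤ σ i then p i * p j else 0)) := by
        rw [two_mul]
        nth_rw 2 [hswap]
        simp only [← sum_add_distrib]
    _ = ∑ j ∈ S, ∑ i ∈ S, (p i * p j + if i = j then p i * p j else 0) := by
        simp only [ite_le_add_ite_ge_of_injective hσ]
    _ = (∑ j ∈ S, p j) ^ 2 + ∑ j ∈ S, p j ^ 2 := by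
        simp only [sum_add_distrib]
        rw [sq, sum_mul_sum, sum_comm]
        exact congrArg _ (sum_congr rfl fun j hj => by rw [sum_ite_eq', if_pos hj, sq])

end

/-- Parallel inequalities of Wolsey and Queyranne: for any single-machine schedule without
idle time (given by the ordering `σ`, so `C_j = ∑_{σ i ≤ σ j} p_i`) and any set `S`,
`∑_{j∈S} p_j C_j ≥ (1/2)(∑_{j∈S} p_j)² + (1/2)∑_{j∈S} p_j²`. -/
theorem stmt_11 {ι : Type*} [Fintype ι] (p : ι → ℝ) (hp : ∀ j, 0 ≤ p j)
    (σ : ι ≃ Fin (Fintype.card ι)) (C : ι → ℝ)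
    (hC : ∀ j, C j = ∑ i ∈ Finset.univ.filter (fun i => σ i ≤ σ j), p i)
    (S : Finset ι) :
    (∑ j ∈ S, p j) ^ 2 / 2 + (∑ j ∈ S, p j ^ 2) / 2 ≤ ∑ j ∈ S, p j * C j := by
  have hpairs := two_mul_sum_sum_filter_le_eq σ.injective p S
  have hle : ∑ j ∈ S, ∑ i ∈ S.filter (fun i => σ i ≤ σ j), p i * p j
      ≤ ∑ j ∈ S, p j * C j := by
    refine sum_le_sum fun j _ => ?_
    rw [← sum_mul, mul_comm, hC j]
    exact mul_le_mul_of_nonneg_left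
      (sum_le_sum_of_subset_of_nonneg (filter_subset_filter _ (subset_univ S)) fun i _ _ => hp i)
      (hp j)
  linarith
end

section
/- Let N = A ⊔ B be a bipartite OR-precedence instance with predecessor map P : B → finite subsets of A, processing times p ≥ 0, and for S ⊆ N and k ∈ N define mc(S,k) = min over T ⊆ N such that there exists U ⊆ S ∪ T with k ∈ U and U a feasible starting set, of ∑_{j∈T} p_j. Then for every feasible (precedence-respecting) schedule with completion times C, every k ∈ N and S ⊆ N: ∑_{j∈S} p_j C_j + mc(S,k)·C_k ≥ (1/2)(∑_{j∈S} p_j + mc(S,k))² + (1/2)(∑_{j∈S} p_j² + mc(S,k)²). -/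
open scoped Classical

/-- Feasible starting set for bipartite OR-precedence constraints. -/
def FSS12 {ι : Type*} [DecidableEq ι] (Pred : ι → Finset ι) (S : Finset ι) : Prop :=
  ∀ j ∈ S, (Pred j).Nonempty → (Pred j ∩ S).Nonempty

/-- Length of a minimal chain of job `k` w.r.t. the set `S`: the minimum total processing
time of a set `T` such that some `U ⊆ S ∪ T` containing `k` is a feasible starting set. -/
noncomputable def minChain {ι : Type*} [Fintype ι] [DecidableEq ι]
    (Pred : ι → Finset ι) (p : ι → ℝ) (S : Finset ι) (k : ι) : ℝ :=
  sInf {v : ℝ | ∃ T : Finset ι,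
    (∃ U ⊆ S ∪ T, k ∈ U ∧ FSS12 Pred U) ∧ v = ∑ j ∈ T, p j}

/-!
Let `m = mc(S,k)` and let `f j` be the total length of the jobs of `S` scheduled no later than
`j`. Every prefix of a feasible schedule is a feasible starting set, so the part outside `S` of
a prefix containing `k` has length at least `m`: thus `C_j ≥ f j + m` once `k` has been
scheduled, and `C_j ≥ f j` always. Weighting by `p_j` over `S`, and adding `m` times the bound
at `k` (whose prefix contains every job of `S` before `k`), gives
`∑ p_j C_j + m C_k ≥ ∑_S p_j f j + m p(S) + m²`; finally `2 ∑_S p_j f j = p(S)² + ∑_S p_j²`.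
-/

open Finset

section Quadratic

variable {ι α : Type*} [LinearOrder α] {σ : ι → α} {S : Finset ι}

lemma ite_le_add_ite_ge (hσ : Set.InjOn σ S) {i j : ι} (hi : i ∈ S) (hj : j ∈ S) (a : ℝ) :
    ((if σ i ≤ σ j then a else 0) + if σ j ≤ σ i then a else 0) = a + if i = j then a else 0 := by
  rcases lt_trichotomy (σ i) (σ j) with h | h | h
  · simp [h.le, h.not_ge, show i ≠ j by rintro rfl; exact h.ne rfl]
  · simp [hσ hi hj h]
  · simp [h.le, h.not_ge, show i ≠ j by rintro rfl; exact h.ne rfl]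

/-- Both orders of summation of `p_i p_j` over `i ≤ j` together cover every pair once and
the diagonal twice. -/
lemma two_mul_sum_mul_sum_filter_le (hσ : Set.InjOn σ S) (p : ι → ℝ) :
    2 * ∑ j ∈ S, p j * ∑ i ∈ S with σ i ≤ σ j, p i = (∑ j ∈ S, p j) ^ 2 + ∑ j ∈ S, p j ^ 2 := by
  have hswap : ∑ j ∈ S, ∑ i ∈ S, (if σ i ≤ σ j then p j * p i else 0)
      = ∑ j ∈ S, ∑ i ∈ S, (if σ j ≤ σ i then p j * p i else 0) := by
    rw [sum_comm]
    refine sum_congr rfl fun j _ => sum_congr rfl fun i _ => ?_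
    rw [mul_comm]
  calc 2 * ∑ j ∈ S, p j * ∑ i ∈ S with σ i ≤ σ j, p i
      = ∑ j ∈ S, ∑ i ∈ S, ((if σ i ≤ σ j then p j * p i else 0)
          + if σ j ≤ σ i then p j * p i else 0) := by
        rw [two_mul]
        simp only [mul_sum, sum_filter, mul_ite, mul_zero, sum_add_distrib, ← hswap]
    _ = ∑ j ∈ S, ∑ i ∈ S, (p j * p i + if i = j then p j * p i else 0) :=
        sum_congr rfl fun j hj => sum_congr rfl fun i hi => ite_le_add_ite_ge hσ hi hj _
    _ = (∑ j ∈ S, p j) ^ 2 + ∑ j ∈ S, p j ^ 2 := by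
        simp only [sum_add_distrib, sum_ite_eq', ← sum_mul_sum, sq]
        exact congrArg _ (sum_congr rfl fun j hj => if_pos hj)

end Quadratic

section MinChain

variable {ι : Type*} [Fintype ι] [DecidableEq ι] {Pred : ι → Finset ι} {p : ι → ℝ}
  {S : Finset ι} {k : ι}

lemma minChain_nonneg (hp : ∀ j, 0 ≤ p j) : 0 ≤ minChain Pred p S k :=
  Real.sInf_nonneg <| by
    rintro v ⟨T, -, rfl⟩
    exact sum_nonneg fun i _ => hp i

lemma minChain_le_sum_sdiff (hp : ∀ j, 0 ≤ p j) {U : Finset ι} (hkU : k ∈ U)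
    (hU : FSS12 Pred U) : minChain Pred p S k ≤ ∑ j ∈ U \ S, p j := by
  refine csInf_le ⟨0, ?_⟩ ⟨U \ S, ⟨U, ?_, hkU, hU⟩, rfl⟩
  · rintro v ⟨T, -, rfl⟩
    exact sum_nonneg fun i _ => hp i
  · rw [union_sdiff_self_eq_union]
    exact subset_union_right

end MinChain

section Schedule

variable {ι α : Type*} [Fintype ι] [LinearOrder α] {Pred : ι → Finset ι} {p : ι → ℝ}
  {S : Finset ι} {k : ι} {σ : ι → α} {C : ι → ℝ}

lemma fss12_filter_le [DecidableEq ι] (hσ : ∀ j, (Pred j).Nonempty → ∃ i ∈ Pred j, σ i < σ j)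
    (j : ι) : FSS12 Pred {i | σ i ≤ σ j} := by
  intro i hi hne
  obtain ⟨i', hi', hlt⟩ := hσ i hne
  refine ⟨i', mem_inter.2 ⟨hi', ?_⟩⟩
  simp only [mem_filter, mem_univ, true_and] at hi ⊢
  exact hlt.le.trans hi

lemma sum_filter_le_le_of_schedule (hp : ∀ j, 0 ≤ p j)
    (hC : ∀ j, ∑ i ∈ univ with σ i ≤ σ j, p i ≤ C j) (j : ι) :
    ∑ i ∈ S with σ i ≤ σ j, p i ≤ C j :=
  (sum_le_sum_of_subset_of_nonneg (filter_subset_filter _ (subset_univ S))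
    fun i _ _ => hp i).trans (hC j)

lemma sum_filter_le_add_minChain_le [DecidableEq ι] (hp : ∀ j, 0 ≤ p j)
    (hσ : ∀ j, (Pred j).Nonempty → ∃ i ∈ Pred j, σ i < σ j)
    (hC : ∀ j, ∑ i ∈ univ with σ i ≤ σ j, p i ≤ C j) {j : ι} (hkj : σ k ≤ σ j) :
    ∑ i ∈ S with σ i ≤ σ j, p i + minChain Pred p S k ≤ C j := by
  have hm := minChain_le_sum_sdiff (S := S) hp (by simpa using hkj) (fss12_filter_le hσ j)
  calc ∑ i ∈ S with σ i ≤ σ j, p i + minChain Pred p S k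
      ≤ ∑ i ∈ ({i | σ i ≤ σ j} : Finset ι) ∩ S, p i
          + ∑ i ∈ ({i | σ i ≤ σ j} : Finset ι) \ S, p i := by
        rw [filter_inter, univ_inter]
        gcongr
    _ = ∑ i ∈ univ with σ i ≤ σ j, p i := sum_inter_add_sum_sdiff _ _ _
    _ ≤ C j := hC j

lemma sum_mul_sum_filter_le_add_le [DecidableEq ι] (hp : ∀ j, 0 ≤ p j)
    (hσ : ∀ j, (Pred j).Nonempty → ∃ i ∈ Pred j, σ i < σ j)
    (hC : ∀ j, ∑ i ∈ univ with σ i ≤ σ j, p i ≤ C j) :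
    ∑ j ∈ S, p j * ∑ i ∈ S with σ i ≤ σ j, p i
        + minChain Pred p S k * ∑ j ∈ S with σ k ≤ σ j, p j ≤ ∑ j ∈ S, p j * C j := by
  rw [mul_sum, sum_filter, ← sum_add_distrib]
  refine sum_le_sum fun j _ => ?_
  split_ifs with hkj
  · rw [mul_comm (minChain Pred p S k), ← mul_add]
    exact mul_le_mul_of_nonneg_left (sum_filter_le_add_minChain_le hp hσ hC hkj) (hp j)
  · simpa using mul_le_mul_of_nonneg_left (sum_filter_le_le_of_schedule hp hC j) (hp j)

lemma sum_filter_lt_add_minChain_le [DecidableEq ι] (hp : ∀ j, 0 ≤ p j)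
    (hσ : ∀ j, (Pred j).Nonempty → ∃ i ∈ Pred j, σ i < σ j)
    (hC : ∀ j, ∑ i ∈ univ with σ i ≤ σ j, p i ≤ C j) :
    ∑ j ∈ S with ¬σ k ≤ σ j, p j + minChain Pred p S k ≤ C k := by
  refine le_trans ?_ (sum_filter_le_add_minChain_le (S := S) hp hσ hC le_rfl)
  gcongr ?_ + _
  refine sum_le_sum_of_subset_of_nonneg (monotone_filter_right S fun j _ hkj => ?_)
    fun j _ _ => hp j
  exact (not_le.1 hkj).le

end Schedule

theorem stmt_12_general {ι : Type*} [Fintype ι] [DecidableEq ι]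
    (Pred : ι → Finset ι)
    (p : ι → ℝ) (hp : ∀ j, 0 ≤ p j)
    (σ : ι ≃ Fin (Fintype.card ι))
    (hσ : ∀ j : ι, (Pred j).Nonempty → ∃ i ∈ Pred j, σ i < σ j)
    (C : ι → ℝ)
    (hC : ∀ j, ∑ i ∈ Finset.univ.filter (fun i => σ i ≤ σ j), p i ≤ C j)
    (k : ι) (S : Finset ι) :
    ((∑ j ∈ S, p j) + minChain Pred p S k) ^ 2 / 2 +
      ((∑ j ∈ S, p j ^ 2) + minChain Pred p S k ^ 2) / 2 ≤
    ∑ j ∈ S, p j * C j + minChain Pred p S k * C k := by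
  have hm := minChain_nonneg (Pred := Pred) (S := S) (k := k) hp
  have hS := sum_mul_sum_filter_le_add_le (S := S) (k := k) hp hσ hC
  have hk := sum_filter_lt_add_minChain_le (S := S) (k := k) hp hσ hC
  have hsplit := sum_filter_add_sum_filter_not S (fun j => σ k ≤ σ j) p
  have hquad := two_mul_sum_mul_sum_filter_le σ.injective.injOn p (S := S)
  linarith [mul_le_mul_of_nonneg_left hk hm, congrArg (minChain Pred p S k * ·) hsplit]

/-- Minimal-chain generalization of the parallel inequalities (Theorem 14): for any
feasible (OR-precedence-respecting) schedule with completion times `C` (idle time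
allowed), any job `k` and any set `S`,
`∑_{j∈S} p_j C_j + mc(S,k)·C_k ≥ (1/2)(∑_{j∈S} p_j + mc(S,k))² + (1/2)(∑_{j∈S} p_j² + mc(S,k)²)`. -/
theorem stmt_12 {ι : Type*} [Fintype ι] [DecidableEq ι]
    (Pred : ι → Finset ι) (hbip : ∀ i j : ι, i ∈ Pred j → Pred i = ∅)
    (p : ι → ℝ) (hp : ∀ j, 0 ≤ p j)
    (σ : ι ≃ Fin (Fintype.card ι))
    (hσ : ∀ j : ι, (Pred j).Nonempty → ∃ i ∈ Pred j, σ i < σ j)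
    (C : ι → ℝ)
    (hC : ∀ j, ∑ i ∈ Finset.univ.filter (fun i => σ i ≤ σ j), p i ≤ C j)
    (k : ι) (S : Finset ι) :
    ((∑ j ∈ S, p j) + minChain Pred p S k) ^ 2 / 2 +
      ((∑ j ∈ S, p j ^ 2) + minChain Pred p S k ^ 2) / 2 ≤
    ∑ j ∈ S, p j * C j + minChain Pred p S k * C k :=
  stmt_12_general Pred p hp σ hσ C hC k S
end

section
/- Consider the instance with jobs A = {a, i_1,...,i_m}, B = {j_1,...,j_m}, P(j_q) = {a, i_q}, p_a = m/2, p_{i_q} = 1, p_{j_q} = 0, w_a = w_{i_q} = 0, w_{j_q} = 1. Then the minimum of ∑_q C_{j_q} over feasible schedules equals m²/2 (achieved by scheduling a first, then all j_q, then all i_q), and the vector C* with C*_{j_q} = 1, C*_{i_q} = q+1, C*_a = 3m/2 + 1 satisfies all minimal-chain inequalities ∑_{j∈S} p_j C_j + mc(S,k) C_k ≥ f_k(S) for all k and S, and has objective value m. Hence the completion-time LP with all minimal-chain inequalities has integrality gap at least m/2 on this family. -/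
open scoped Classical

/-- Feasible starting set for bipartite OR-precedence constraints. -/
def FSS13 {ι : Type*} [DecidableEq ι] (Pred : ι → Finset ι) (S : Finset ι) : Prop :=
  ∀ j ∈ S, (Pred j).Nonempty → (Pred j ∩ S).Nonempty

/-- Length of a minimal chain of job `k` w.r.t. the set `S`. -/
noncomputable def minChain13 {ι : Type*} [Fintype ι] [DecidableEq ι]
    (Pred : ι → Finset ι) (p : ι → ℝ) (S : Finset ι) (k : ι) : ℝ :=
  sInf {v : ℝ | ∃ T : Finset ι,
    (∃ U ⊆ S ∪ T, k ∈ U ∧ FSS13 Pred U) ∧ v = ∑ j ∈ T, p j}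

/-!
Jobs are encoded as `a = none`, `i_q = some (false, q)`, `j_q = some (true, q)`, with `q`
counted from `0` (hence `C*_{i_q} = q + 2`).

Lower bound: in a feasible schedule let `Q` be the set of `q` with `j_q` before `a`; each such
`j_q` must wait for `i_q`. So every `j_q` with `q ∉ Q` completes after `a` and all `i_r`, `r ∈ Q`,
i.e. at time `≥ m/2 + |Q|`, and the `j_q` with `q ∈ Q` complete no earlier than their ranks
`1, …, |Q|` among themselves. Summing gives `m²/2 + |Q|(m + 1 - |Q|)/2 ≥ m²/2`.

LP inequalities: with `μ = mc(S,k)` and `f(S) = p(S)²/2 + ∑_{j ∈ S} p_j²/2` one has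
`f_k(S) = f(S) + p(S) μ + μ²`. Distinct indices `q ∈ Fin m` satisfy `∑ (q + 1) ≥ n(n+1)/2`, which
yields `f(S) + p(S) ≤ ∑_{j ∈ S} p_j C*_j`, so it suffices that `p(S) μ + μ² ≤ p(S) + μ C*_k`. This
holds because `μ ≤ 1 ≤ C*_k`, except for `k = a`, where `μ = 0` if `a ∈ S` and otherwise
`μ ≤ m/2` and `p(S) ≤ m`.
-/

open Finset

theorem two_mul_sum_card_filter_le_eq {α β : Type*} [LinearOrder β] (s : Finset α) (f : α → β)
    (hf : Set.InjOn f s) :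
    2 * ∑ q ∈ s, #{r ∈ s | f r ≤ f q} = #s * (#s + 1) := by
  have hpair : ∀ q ∈ s, #{r ∈ s | f r ≤ f q} + #{r ∈ s | f q ≤ f r} = #s + 1 := by
    intro q hq
    have hunion : {r ∈ s | f r ≤ f q} ∪ {r ∈ s | f q ≤ f r} = s := by
      rw [← filter_or]; exact filter_true_of_mem fun r _ => le_total _ _
    have hinter : {r ∈ s | f r ≤ f q} ∩ {r ∈ s | f q ≤ f r} = {q} := by
      ext r
      simp only [← filter_and, mem_filter, mem_singleton, ← le_antisymm_iff]
      exact ⟨fun ⟨hr, h⟩ => hf hr hq h, by rintro rfl; exact ⟨hq, rfl⟩⟩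
    rw [← card_union_add_card_inter, hunion, hinter, card_singleton]
  have hswap : ∑ q ∈ s, #{r ∈ s | f q ≤ f r} = ∑ q ∈ s, #{r ∈ s | f r ≤ f q} :=
    sum_card_bipartiteAbove_eq_sum_card_bipartiteBelow (r := fun q r => f q ≤ f r)
  calc 2 * ∑ q ∈ s, #{r ∈ s | f r ≤ f q}
      = ∑ q ∈ s, (#{r ∈ s | f r ≤ f q} + #{r ∈ s | f q ≤ f r}) := by
        rw [sum_add_distrib, hswap, two_mul]
    _ = #s * (#s + 1) := by rw [sum_congr rfl hpair, sum_const, smul_eq_mul]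

theorem card_mul_card_add_one_le_two_mul_sum {m : ℕ} (s : Finset (Fin m)) :
    #s * (#s + 1) ≤ 2 * ∑ q ∈ s, ((q : ℕ) + 1) := by
  rw [← two_mul_sum_card_filter_le_eq s id (Set.injOn_id _)]
  gcongr with q
  calc #{r ∈ s | r ≤ q} ≤ #(Iic q) := card_le_card fun r hr => mem_Iic.2 (mem_filter.1 hr).2
    _ = q + 1 := Fin.card_Iic q

theorem exists_equiv_fin_val_eq {α : Type*} [Fintype α] (c : α → ℕ) (hc : Function.Injective c)
    (hlt : ∀ x, c x < Fintype.card α) : ∃ σ : α ≃ Fin (Fintype.card α), ∀ x, (σ x : ℕ) = c x := by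
  let f : α → Fin (Fintype.card α) := fun x => ⟨c x, hlt x⟩
  have hf : Function.Bijective f := (Fintype.bijective_iff_injective_and_card f).2
    ⟨fun x y h => hc (Fin.mk.inj_iff.1 h), (Fintype.card_fin _).symm⟩
  exact ⟨Equiv.ofBijective f hf, fun _ => rfl⟩

theorem minChain13_nonneg {ι : Type*} [Fintype ι] [DecidableEq ι] {Pred : ι → Finset ι}
    {p : ι → ℝ} (hp : ∀ x, 0 ≤ p x) (S : Finset ι) (k : ι) : 0 ≤ minChain13 Pred p S k :=
  Real.sInf_nonneg <| by rintro v ⟨T, -, rfl⟩; exact sum_nonneg fun x _ => hp x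

theorem minChain13_le {ι : Type*} [Fintype ι] [DecidableEq ι] {Pred : ι → Finset ι}
    {p : ι → ℝ} (hp : ∀ x, 0 ≤ p x) {S T U : Finset ι} {k : ι} (hU : U ⊆ S ∪ T) (hk : k ∈ U)
    (hfeas : FSS13 Pred U) : minChain13 Pred p S k ≤ ∑ j ∈ T, p j :=
  csInf_le ⟨0, by rintro v ⟨T, -, rfl⟩; exact sum_nonneg fun x _ => hp x⟩
    ⟨T, ⟨U, hU, hk, hfeas⟩, rfl⟩

theorem fss13_singleton {ι : Type*} [DecidableEq ι] {Pred : ι → Finset ι} {k : ι}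
    (hk : Pred k = ∅) : FSS13 Pred {k} := by
  intro j hj hne
  rw [mem_singleton.1 hj, hk] at hne
  exact absurd hne not_nonempty_empty

def completionTime {α : Type*} [Fintype α] {n : ℕ} (p : α → ℝ) (σ : α ≃ Fin n) (j : α) : ℝ :=
  ∑ i ∈ univ.filter (fun i => σ i ≤ σ j), p i

theorem sum_le_completionTime {α : Type*} [Fintype α] {n : ℕ} {p : α → ℝ} (hp : ∀ x, 0 ≤ p x)
    (σ : α ≃ Fin n) {W : Finset α} {j : α} (hW : ∀ i ∈ W, σ i ≤ σ j) :
    ∑ i ∈ W, p i ≤ completionTime p σ j :=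
  sum_le_sum_of_subset_of_nonneg (fun i hi => mem_filter.2 ⟨mem_univ _, hW i hi⟩)
    fun i _ _ => hp i

section GapInstance

variable {m : ℕ}

theorem processingTime_nonneg {p : Option (Bool × Fin m) → ℝ} (hpa : p none = m / 2)
    (hpi : ∀ q : Fin m, p (some (false, q)) = 1) (hpj : ∀ q : Fin m, p (some (true, q)) = 0) :
    ∀ x, 0 ≤ p x := by
  rintro (_ | ⟨_ | _, q⟩)
  · rw [hpa]; positivity
  · rw [hpi]; exact zero_le_one
  · rw [hpj]

theorem sum_eq_ite_add_sum_filter (S : Finset (Option (Bool × Fin m)))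
    (g : Option (Bool × Fin m) → ℝ) (hg : ∀ q, g (some (true, q)) = 0) :
    ∑ j ∈ S, g j = (if none ∈ S then g none else 0)
      + ∑ q ∈ univ.filter (fun q : Fin m => some (false, q) ∈ S), g (some (false, q)) := by
  rw [← Fintype.sum_ite_mem, Fintype.sum_option, Fintype.sum_prod_type, Fintype.sum_bool,
    sum_filter]
  simp [hg]

/-- Position of a job in the optimal schedule `a, j_1, …, j_m, i_1, …, i_m`. -/
def optimalPosition (m : ℕ) : Option (Bool × Fin m) → ℕ
  | none => 0
  | some (true, q) => q + 1
  | some (false, q) => m + 1 + q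

theorem optimalPosition_injective : Function.Injective (optimalPosition m) := by
  rintro (_ | ⟨_ | _, q⟩) (_ | ⟨_ | _, r⟩) h <;> simp only [optimalPosition] at h <;>
    first | rfl | omega | (rw [Fin.ext (by omega : (q : ℕ) = r)])

theorem optimalPosition_lt_card (x : Option (Bool × Fin m)) :
    optimalPosition m x < Fintype.card (Option (Bool × Fin m)) := by
  rcases x with _ | ⟨_ | _, q⟩ <;> simp [optimalPosition] <;> omega

theorem exists_schedule_sum_completionTime_eq {p : Option (Bool × Fin m) → ℝ}
    (hpa : p none = m / 2) (hpj : ∀ q : Fin m, p (some (true, q)) = 0)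
    {Pred : Option (Bool × Fin m) → Finset (Option (Bool × Fin m))}
    (hPa : Pred none = ∅) (hPi : ∀ q, Pred (some (false, q)) = ∅)
    (hPj : ∀ q, Pred (some (true, q)) = {none, some (false, q)}) :
    ∃ σ : Option (Bool × Fin m) ≃ Fin (Fintype.card (Option (Bool × Fin m))),
      (∀ j, (Pred j).Nonempty → ∃ i ∈ Pred j, σ i < σ j) ∧
      (m : ℝ) ^ 2 / 2 = ∑ q : Fin m, completionTime p σ (some (true, q)) := by
  obtain ⟨σ, hσ⟩ := exists_equiv_fin_val_eq _ optimalPosition_injective optimalPosition_lt_card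
  refine ⟨σ, ?_, ?_⟩
  · rintro (_ | ⟨_ | _, q⟩) hne
    · simp [hPa] at hne
    · simp [hPi] at hne
    · refine ⟨none, by simp [hPj], ?_⟩
      simp [Fin.lt_def, hσ, optimalPosition]
  · have hC : ∀ q : Fin m, completionTime p σ (some (true, q)) = m / 2 := by
      intro q
      rw [completionTime, sum_eq_ite_add_sum_filter _ _ hpj]
      have hlate : ∀ r : Fin m, ¬ σ (some (false, r)) ≤ σ (some (true, q)) := by
        simp only [Fin.le_def, hσ, optimalPosition]; omega
      simp only [mem_filter, mem_univ, true_and, hlate, filter_false, sum_empty, add_zero]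
      simp [hpa, Fin.le_def, hσ, optimalPosition]
    simp only [hC, sum_const, card_univ, Fintype.card_fin, nsmul_eq_mul]
    ring

theorem sq_div_two_le_sum_completionTime {p : Option (Bool × Fin m) → ℝ}
    (hpa : p none = m / 2) (hpi : ∀ q : Fin m, p (some (false, q)) = 1)
    (hpj : ∀ q : Fin m, p (some (true, q)) = 0)
    {Pred : Option (Bool × Fin m) → Finset (Option (Bool × Fin m))}
    (hPj : ∀ q, Pred (some (true, q)) = {none, some (false, q)})
    (σ : Option (Bool × Fin m) ≃ Fin (Fintype.card (Option (Bool × Fin m))))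
    (hfeas : ∀ j, (Pred j).Nonempty → ∃ i ∈ Pred j, σ i < σ j) :
    (m : ℝ) ^ 2 / 2 ≤ ∑ q : Fin m, completionTime p σ (some (true, q)) := by
  have hp := processingTime_nonneg hpa hpi hpj
  set Q := univ.filter fun q : Fin m => σ (some (true, q)) < σ none
  have hsum_i : ∀ s : Finset (Fin m), ∑ x ∈ s.image (fun r => some (false, r)), p x = #s := by
    intro s
    rw [sum_image (by simp), sum_congr rfl fun r _ => hpi r, sum_const, nsmul_one]
  have hbefore : ∀ q ∈ Q, σ (some (false, q)) < σ (some (true, q)) := by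
    intro q hq
    obtain ⟨i, hi, hlt⟩ := hfeas (some (true, q)) (by simp [hPj])
    rw [hPj, mem_insert, mem_singleton] at hi
    rcases hi with rfl | rfl
    · exact absurd (mem_filter.1 hq).2 (asymm hlt)
    · exact hlt
  have hearly : ∀ q ∈ Q, (#{r ∈ Q | σ (some (true, r)) ≤ σ (some (true, q))} : ℝ)
      ≤ completionTime p σ (some (true, q)) := by
    intro q _
    rw [← hsum_i]
    refine sum_le_completionTime hp σ fun x hx => ?_
    obtain ⟨r, hr, rfl⟩ := mem_image.1 hx
    exact (hbefore r (mem_filter.1 hr).1).le.trans (mem_filter.1 hr).2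
  have hlate : ∀ q ∈ univ.filter (fun q => ¬ σ (some (true, q)) < σ none),
      (m : ℝ) / 2 + #Q ≤ completionTime p σ (some (true, q)) := by
    intro q hq
    have haq : σ none ≤ σ (some (true, q)) := not_lt.1 (mem_filter.1 hq).2
    rw [← hpa, ← hsum_i, ← sum_insert (by simp)]
    refine sum_le_completionTime hp σ fun x hx => ?_
    rcases mem_insert.1 hx with rfl | hx
    · exact haq
    · obtain ⟨r, hr, rfl⟩ := mem_image.1 hx
      exact ((hbefore r hr).trans (mem_filter.1 hr).2).le.trans haq
  have hrank : (2 : ℝ) * ∑ q ∈ Q, (#{r ∈ Q | σ (some (true, r)) ≤ σ (some (true, q))} : ℝ)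
      = #Q * (#Q + 1) := by
    exact_mod_cast two_mul_sum_card_filter_le_eq Q (fun q => σ (some (true, q)))
      fun a _ b _ h => by simpa using σ.injective h
  have hcard : (#Q : ℝ) + #(univ.filter fun q => ¬ σ (some (true, q)) < σ none) = m := by
    exact_mod_cast (card_filter_add_card_filter_not _).trans (card_fin m)
  have hQ := sum_le_sum hearly
  have hQc := sum_le_sum hlate
  rw [sum_const, nsmul_eq_mul] at hQc
  rw [← sum_filter_add_sum_filter_not univ fun q => σ (some (true, q)) < σ none]
  nlinarith [(#Q).cast_nonneg (α := ℝ)]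

theorem sq_sum_add_sum_sq_div_two_add_sum_le {p Cs : Option (Bool × Fin m) → ℝ}
    (hpa : p none = m / 2) (hpi : ∀ q : Fin m, p (some (false, q)) = 1)
    (hpj : ∀ q : Fin m, p (some (true, q)) = 0) (hCa : Cs none = 3 * m / 2 + 1)
    (hCi : ∀ q : Fin m, Cs (some (false, q)) = (q : ℕ) + 2) (S : Finset (Option (Bool × Fin m))) :
    (∑ j ∈ S, p j) ^ 2 / 2 + (∑ j ∈ S, p j ^ 2) / 2 + ∑ j ∈ S, p j ≤ ∑ j ∈ S, p j * Cs j := by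
  set I := univ.filter fun q : Fin m => some (false, q) ∈ S
  have hsum : ∑ j ∈ S, p j = (if none ∈ S then (m : ℝ) / 2 else 0) + #I := by
    rw [sum_eq_ite_add_sum_filter S p hpj, hpa]
    simp [I, hpi]
  have hsum_sq : ∑ j ∈ S, p j ^ 2 = (if none ∈ S then ((m : ℝ) / 2) ^ 2 else 0) + #I := by
    rw [sum_eq_ite_add_sum_filter S _ fun q => by simp [hpj], hpa]
    simp [I, hpi]
  have hsum_mul : ∑ j ∈ S, p j * Cs j
      = (if none ∈ S then (m : ℝ) / 2 * (3 * m / 2 + 1) else 0)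
        + ∑ q ∈ I, (((q : ℕ) + 1 : ℕ) : ℝ) + #I := by
    rw [sum_eq_ite_add_sum_filter S _ fun q => by simp [hpj], hpa, hCa]
    simp [hpi, hCi, sum_add_distrib]
    ring
  have hI : (#I : ℝ) ≤ m := by exact_mod_cast (card_filter_le _ _).trans (card_fin m).le
  have hrank : (#I : ℝ) * (#I + 1) ≤ 2 * ∑ q ∈ I, (((q : ℕ) + 1 : ℕ) : ℝ) := by
    exact_mod_cast card_mul_card_add_one_le_two_mul_sum I
  rw [hsum, hsum_sq, hsum_mul]
  split_ifs <;> nlinarith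

theorem add_sq_div_two_add_le {P Q R μ K : ℝ} (hR : P ^ 2 / 2 + Q / 2 + P ≤ R) (hP : 0 ≤ P)
    (hμ : 0 ≤ μ) (hK : (μ ≤ 1 ∧ μ ≤ K) ∨ P + μ ≤ K) :
    (P + μ) ^ 2 / 2 + (Q + μ ^ 2) / 2 ≤ R + μ * K := by
  rcases hK with ⟨h1, hK⟩ | hK
  · nlinarith [mul_nonneg hP (sub_nonneg.2 h1), mul_nonneg hμ (sub_nonneg.2 hK)]
  · nlinarith [mul_nonneg hμ (sub_nonneg.2 hK)]

theorem minChain13_inequality {p Cs : Option (Bool × Fin m) → ℝ}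
    (hpa : p none = m / 2) (hpi : ∀ q : Fin m, p (some (false, q)) = 1)
    (hpj : ∀ q : Fin m, p (some (true, q)) = 0)
    {Pred : Option (Bool × Fin m) → Finset (Option (Bool × Fin m))}
    (hPa : Pred none = ∅) (hPi : ∀ q, Pred (some (false, q)) = ∅)
    (hPj : ∀ q, Pred (some (true, q)) = {none, some (false, q)})
    (hCa : Cs none = 3 * m / 2 + 1) (hCi : ∀ q : Fin m, Cs (some (false, q)) = (q : ℕ) + 2)
    (hCj : ∀ q : Fin m, Cs (some (true, q)) = 1)
    (k : Option (Bool × Fin m)) (S : Finset (Option (Bool × Fin m))) :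
    ((∑ j ∈ S, p j) + minChain13 Pred p S k) ^ 2 / 2 +
        ((∑ j ∈ S, p j ^ 2) + minChain13 Pred p S k ^ 2) / 2 ≤
      ∑ j ∈ S, p j * Cs j + minChain13 Pred p S k * Cs k := by
  have hp := processingTime_nonneg hpa hpi hpj
  refine add_sq_div_two_add_le (sq_sum_add_sum_sq_div_two_add_sum_le hpa hpi hpj hCa hCi S)
    (sum_nonneg fun j _ => hp j) (minChain13_nonneg hp S k) ?_
  rcases k with _ | ⟨_ | _, q⟩
  · by_cases ha : none ∈ S
    · have hμ : minChain13 Pred p S none ≤ 0 := by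
        simpa using minChain13_le (T := ∅) hp (by simpa using ha) (mem_singleton_self _)
          (fss13_singleton hPa)
      have hK : (0 : ℝ) ≤ Cs none := by rw [hCa]; positivity
      exact Or.inl ⟨by linarith, by linarith⟩
    · right
      have hμ : minChain13 Pred p S none ≤ m / 2 := by
        simpa [hpa] using minChain13_le (T := {none}) hp subset_union_right (mem_singleton_self _)
          (fss13_singleton hPa)
      have hP : ∑ j ∈ S, p j ≤ m := by
        rw [sum_eq_ite_add_sum_filter S p hpj, if_neg ha, zero_add, sum_congr rfl fun q _ => hpi q]
        simpa using (card_filter_le _ _).trans (card_fin m).le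
      linarith
  · have hμ : minChain13 Pred p S (some (false, q)) ≤ 1 := by
      simpa [hpi] using minChain13_le (T := {some (false, q)}) hp subset_union_right
        (mem_singleton_self _) (fss13_singleton (hPi q))
    have hK : (1 : ℝ) ≤ Cs (some (false, q)) := by rw [hCi]; linarith [(q : ℕ).cast_nonneg (α := ℝ)]
    exact Or.inl ⟨hμ, hμ.trans hK⟩
  · have hfeas : FSS13 Pred {some (false, q), some (true, q)} := by
      intro j hj hne
      rcases mem_insert.1 hj with rfl | hj
      · simp [hPi] at hne
      · rw [mem_singleton.1 hj, hPj]
        exact ⟨some (false, q), by simp⟩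
    have hμ : minChain13 Pred p S (some (true, q)) ≤ 1 := by
      simpa [hpi, hpj] using minChain13_le (T := {some (false, q), some (true, q)}) hp
        subset_union_right (by simp) hfeas
    exact Or.inl ⟨hμ, (hCj q).symm ▸ hμ⟩

end GapInstance

theorem stmt_13_general (m : ℕ)
    (p : Option (Bool × Fin m) → ℝ)
    (hpa : p none = m / 2)
    (hpi : ∀ q : Fin m, p (some (false, q)) = 1)
    (hpj : ∀ q : Fin m, p (some (true, q)) = 0)
    (Pred : Option (Bool × Fin m) → Finset (Option (Bool × Fin m)))
    (hPa : Pred none = ∅)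
    (hPi : ∀ q, Pred (some (false, q)) = ∅)
    (hPj : ∀ q, Pred (some (true, q)) = {none, some (false, q)})
    (Cs : Option (Bool × Fin m) → ℝ)
    (hCa : Cs none = 3 * m / 2 + 1)
    (hCi : ∀ q : Fin m, Cs (some (false, q)) = (q : ℕ) + 2)
    (hCj : ∀ q : Fin m, Cs (some (true, q)) = 1) :
    IsLeast
      {v : ℝ | ∃ σ : Option (Bool × Fin m) ≃ Fin (Fintype.card (Option (Bool × Fin m))),
        (∀ j, (Pred j).Nonempty → ∃ i ∈ Pred j, σ i < σ j) ∧
        v = ∑ q : Fin m,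
          ∑ i ∈ Finset.univ.filter (fun i => σ i ≤ σ (some (true, q))), p i}
      ((m : ℝ) ^ 2 / 2) ∧
    (∀ (k : Option (Bool × Fin m)) (S : Finset (Option (Bool × Fin m))),
      ((∑ j ∈ S, p j) + minChain13 Pred p S k) ^ 2 / 2 +
        ((∑ j ∈ S, p j ^ 2) + minChain13 Pred p S k ^ 2) / 2 ≤
      ∑ j ∈ S, p j * Cs j + minChain13 Pred p S k * Cs k) ∧
    (∑ q : Fin m, Cs (some (true, q)) = m) := by
  refine ⟨⟨exists_schedule_sum_completionTime_eq hpa hpj hPa hPi hPj, ?_⟩,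
    minChain13_inequality hpa hpi hpj hPa hPi hPj hCa hCi hCj, by simp [hCj]⟩
  rintro v ⟨σ, hfeas, rfl⟩
  exact sq_div_two_le_sum_completionTime hpa hpi hpj hPj σ hfeas

/-- The gap instance for the completion-time LP: jobs `a = none`, `i_q = some (false, q)`,
`j_q = some (true, q)` with `P(j_q) = {a, i_q}`, `p_a = m/2`, `p_{i_q} = 1`, `p_{j_q} = 0`,
`w_{j_q} = 1`.  The optimal schedule value is `m²/2`, while the vector `C*` with
`C*_{j_q} = 1`, `C*_{i_q} = q + 1`, `C*_a = 3m/2 + 1` satisfies all minimal-chain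
inequalities and has objective value `m`. -/
theorem stmt_13 (m : ℕ) (hm : 1 ≤ m)
    (p : Option (Bool × Fin m) → ℝ)
    (hpa : p none = m / 2)
    (hpi : ∀ q : Fin m, p (some (false, q)) = 1)
    (hpj : ∀ q : Fin m, p (some (true, q)) = 0)
    (Pred : Option (Bool × Fin m) → Finset (Option (Bool × Fin m)))
    (hPa : Pred none = ∅)
    (hPi : ∀ q, Pred (some (false, q)) = ∅)
    (hPj : ∀ q, Pred (some (true, q)) = {none, some (false, q)})
    (Cs : Option (Bool × Fin m) → ℝ)
    (hCa : Cs none = 3 * m / 2 + 1)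
    (hCi : ∀ q : Fin m, Cs (some (false, q)) = (q : ℕ) + 2)
    (hCj : ∀ q : Fin m, Cs (some (true, q)) = 1) :
    IsLeast
      {v : ℝ | ∃ σ : Option (Bool × Fin m) ≃ Fin (Fintype.card (Option (Bool × Fin m))),
        (∀ j, (Pred j).Nonempty → ∃ i ∈ Pred j, σ i < σ j) ∧
        v = ∑ q : Fin m,
          ∑ i ∈ Finset.univ.filter (fun i => σ i ≤ σ (some (true, q))), p i}
      ((m : ℝ) ^ 2 / 2) ∧
    (∀ (k : Option (Bool × Fin m)) (S : Finset (Option (Bool × Fin m))),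
      ((∑ j ∈ S, p j) + minChain13 Pred p S k) ^ 2 / 2 +
        ((∑ j ∈ S, p j ^ 2) + minChain13 Pred p S k ^ 2) / 2 ≤
      ∑ j ∈ S, p j * Cs j + minChain13 Pred p S k * Cs k) ∧
    (∑ q : Fin m, Cs (some (true, q)) = m) :=
  stmt_13_general m p hpa hpi hpj Pred hPa hPi hPj Cs hCa hCi hCj
end
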